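/- Let L be a finite set, let p : L → ℝ satisfy p(l) ≥ 0 for all l and Σ_{l∈L} p(l) = 1, and let Ln ⊆ La ⊆ L with Ln ≠ ∅ and La\Ln ≠ ∅. Let Cn, Cπ : L → ℝ satisfy Cn(l) < Cπ(l) for all l ∈ Ln, Cn(l) > Cπ(l) for all l ∈ La\Ln, and Cn(l) = Cπ(l) for all l ∈ L\La. Set m̃̄ = min_{l∈La\Ln} (Cn(l) − Cπ(l)) and M̃ = max_{l∈Ln} (Cπ(l) − Cn(l)). If Σ_{l∈Ln} p(l) < (m̃̄ / (m̃̄ + M̃)) · Σ_{l∈La} p(l), then Σ_{l∈L} p(l)·Cn(l) > Σ_{l∈L} p(l)·Cπ(l). -/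

import Mathlib

open Finset

section WeightedSums

variable {ι : Type*} {p d : ι → ℝ}

theorem mul_sum_le_sum_mul_of_le {s : Finset ι} {m : ℝ} (hp : ∀ i ∈ s, 0 ≤ p i)
    (hd : ∀ i ∈ s, m ≤ d i) : m * ∑ i ∈ s, p i ≤ ∑ i ∈ s, p i * d i := by
  rw [mul_sum]
  exact sum_le_sum fun i hi => by nlinarith [hp i hi, hd i hi]

/-- With `a = P(t \ s)` and `b = P(s)`, the threshold `b < m / (m + M) · (a + b)` is
`M · b < m · a`, which beats the worst case `∑ p d ≥ m · a - M · b`. -/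
theorem sum_mul_pos_of_sum_lt_div_mul [DecidableEq ι] {s t : Finset ι} (hst : s ⊆ t)
    {m M : ℝ} (hp : ∀ i ∈ t, 0 ≤ p i) (hmid : ∀ i ∈ t \ s, m ≤ d i)
    (hin : ∀ i ∈ s, -M ≤ d i) (hmM : 0 < m + M)
    (hthresh : ∑ i ∈ s, p i < m / (m + M) * ∑ i ∈ t, p i) :
    0 < ∑ i ∈ t, p i * d i := by
  have hmass : ∑ i ∈ t \ s, p i + ∑ i ∈ s, p i = ∑ i ∈ t, p i := sum_sdiff hst
  have hmid_bound := mul_sum_le_sum_mul_of_le (fun i hi => hp i (sdiff_subset hi)) hmid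
  have hin_bound := mul_sum_le_sum_mul_of_le (fun i hi => hp i (hst hi)) hin
  have hthresh' : (∑ i ∈ s, p i) * (m + M) < m * ∑ i ∈ t, p i := by
    rwa [div_mul_eq_mul_div, lt_div_iff₀ hmM] at hthresh
  rw [← hmass] at hthresh'
  rw [← sum_sdiff hst]
  linarith

theorem sum_mul_sub_sum_mul_eq_of_eq_of_notMem [Fintype ι] {f g : ι → ℝ} {t : Finset ι}
    (hfg : ∀ i ∉ t, f i = g i) :
    ∑ i, p i * f i - ∑ i, p i * g i = ∑ i ∈ t, p i * (f i - g i) := by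
  rw [← sum_sub_distrib, ← sum_subset (subset_univ t) fun i _ hi => by rw [hfg i hi, sub_self]]
  exact sum_congr rfl fun i _ => by ring

end WeightedSums

theorem weak_reasonable_part2_general {L : Type*} [Fintype L] [DecidableEq L]
    (p : L → ℝ) (hp : ∀ l, 0 ≤ p l)
    (Ln La : Finset L) (hsub : Ln ⊆ La)
    (Cn Cπ : L → ℝ)
    (hin : ∀ l ∈ Ln, Cn l < Cπ l)
    (hmid : ∀ l ∈ La \ Ln, Cπ l < Cn l)
    (hout : ∀ l ∉ La, Cn l = Cπ l)
    (mbar M : ℝ)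
    (hmbar : IsLeast {x : ℝ | ∃ l ∈ La \ Ln, x = Cn l - Cπ l} mbar)
    (hM : IsGreatest {x : ℝ | ∃ l ∈ Ln, x = Cπ l - Cn l} M)
    (hthresh : ∑ l ∈ Ln, p l < mbar / (mbar + M) * ∑ l ∈ La, p l) :
    ∑ l, p l * Cπ l < ∑ l, p l * Cn l := by
  obtain ⟨l₀, hl₀, rfl⟩ := hmbar.1
  obtain ⟨l₁, hl₁, rfl⟩ := hM.1
  have hmM : 0 < Cn l₀ - Cπ l₀ + (Cπ l₁ - Cn l₁) := by
    linarith [hmid l₀ hl₀, hin l₁ hl₁]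
  have hpos := sum_mul_pos_of_sum_lt_div_mul hsub (fun l _ => hp l)
    (fun l hl => hmbar.2 ⟨l, hl, rfl⟩)
    (fun l hl => by linarith [hM.2 ⟨l, hl, rfl⟩]) hmM hthresh
  rw [← sum_mul_sub_sum_mul_eq_of_eq_of_notMem hout] at hpos
  linarith

/-- Part 2 of the proposition on metrics satisfying the weakened hierarchical
reasonableness conditions (Equations (2) and (4)): if the probability of the node `n`
is below `q_min(n) · P(a_n)`, then the expected cost of the node strictly exceeds the
expected cost of the parent. -/
theorem weak_reasonable_part2 {L : Type*} [Fintype L] [DecidableEq L]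
    (p : L → ℝ) (hp : ∀ l, 0 ≤ p l) (hpsum : ∑ l, p l = 1)
    (Ln La : Finset L) (hsub : Ln ⊆ La)
    (hLn : Ln.Nonempty) (hdiff : (La \ Ln).Nonempty)
    (Cn Cπ : L → ℝ)
    (hin : ∀ l ∈ Ln, Cn l < Cπ l)
    (hmid : ∀ l ∈ La \ Ln, Cπ l < Cn l)
    (hout : ∀ l ∉ La, Cn l = Cπ l)
    (mbar M : ℝ)
    (hmbar : IsLeast {x : ℝ | ∃ l ∈ La \ Ln, x = Cn l - Cπ l} mbar)
    (hM : IsGreatest {x : ℝ | ∃ l ∈ Ln, x = Cπ l - Cn l} M)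
    (hthresh : ∑ l ∈ Ln, p l < mbar / (mbar + M) * ∑ l ∈ La, p l) :
    ∑ l, p l * Cπ l < ∑ l, p l * Cn l :=
  weak_reasonable_part2_general p hp Ln La hsub Cn Cπ hin hmid hout mbar M hmbar hM hthresh
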